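/- arXiv:1902.05130 — 4 statements merged into one kernel-verified Lean document; each statement's English description precedes it below -/
import Mathlib

section
/- Let a, b be nonzero vectors in ℝⁿ with aᵀb ≠ 0, and let κ₀, κ₁ > 0. Then the matrix H = κ₀(|a|² I − a aᵀ) + κ₁ b bᵀ is symmetric and positive definite, and satisfies H M = Mᵀ H where M = I + a bᵀ. -/
/-!
`|a|² I − a aᵀ` is positive semidefinite with kernel `span a` (equality case of Cauchy–Schwarz,
via Lagrange's identity), and `b bᵀ` is positive semidefinite with kernel `b⊥`; since `aᵀb ≠ 0`
these kernels meet only in `0`, so `H` is positive definite. For the intertwining relation, the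
first summand annihilates `a`, so `H a = κ₁ (b ⬝ a) b`, whence both
`H a bᵀ` and `b aᵀ H = b (H a)ᵀ` equal `κ₁ (b ⬝ a) b bᵀ`.
-/

open Matrix

variable {m R : Type*} [Fintype m]

section CommRing

variable [CommRing R]

theorem dotProduct_self_smul_sub_dotProduct_smul (a x : m → R) :
    ((a ⬝ᵥ a) • x - (a ⬝ᵥ x) • a) ⬝ᵥ ((a ⬝ᵥ a) • x - (a ⬝ᵥ x) • a)
      = (a ⬝ᵥ a) * ((a ⬝ᵥ a) * (x ⬝ᵥ x) - (a ⬝ᵥ x) ^ 2) := by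
  simp only [sub_dotProduct, dotProduct_sub, smul_dotProduct, dotProduct_smul, smul_eq_mul,
    dotProduct_comm x a]
  ring

theorem Matrix.IsSymm.mul_one_add_vecMulVec [DecidableEq m] {H : Matrix m m R}
    (hH : H.IsSymm) {a b : m → R} {c : R} (hHa : H *ᵥ a = c • b) :
    H * (1 + vecMulVec a b) = (1 + vecMulVec a b)ᵀ * H := by
  rw [mul_add, mul_one, transpose_add, transpose_one, add_mul, one_mul, transpose_vecMulVec,
    mul_vecMulVec, vecMulVec_mul, ← mulVec_transpose, hH.eq, hHa, smul_vecMulVec, vecMulVec_smul]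

variable [DecidableEq m]

def rankOneSymmetrizer (κ₀ κ₁ : R) (a b : m → R) : Matrix m m R :=
  κ₀ • ((a ⬝ᵥ a) • (1 : Matrix m m R) - vecMulVec a a) + κ₁ • vecMulVec b b

variable (κ₀ κ₁ : R) (a b : m → R)

theorem rankOneSymmetrizer_isSymm : (rankOneSymmetrizer κ₀ κ₁ a b).IsSymm :=
  have (v : m → R) : (vecMulVec v v).IsSymm := transpose_vecMulVec v v
  (((isSymm_one.smul _).sub (this a)).smul κ₀).add ((this b).smul κ₁)

theorem rankOneSymmetrizer_mulVec (x : m → R) :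
    rankOneSymmetrizer κ₀ κ₁ a b *ᵥ x
      = κ₀ • ((a ⬝ᵥ a) • x - (a ⬝ᵥ x) • a) + κ₁ • (b ⬝ᵥ x) • b := by
  simp only [rankOneSymmetrizer, add_mulVec, smul_mulVec, sub_mulVec, one_mulVec,
    vecMulVec_mulVec, op_smul_eq_smul]

theorem rankOneSymmetrizer_mulVec_left :
    rankOneSymmetrizer κ₀ κ₁ a b *ᵥ a = (κ₁ * (b ⬝ᵥ a)) • b := by
  rw [rankOneSymmetrizer_mulVec, sub_self, smul_zero, zero_add, smul_smul]

theorem dotProduct_rankOneSymmetrizer_mulVec (x : m → R) :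
    x ⬝ᵥ (rankOneSymmetrizer κ₀ κ₁ a b *ᵥ x)
      = κ₀ * ((a ⬝ᵥ a) * (x ⬝ᵥ x) - (a ⬝ᵥ x) ^ 2) + κ₁ * (b ⬝ᵥ x) ^ 2 := by
  simp only [rankOneSymmetrizer_mulVec, dotProduct_add, dotProduct_sub, dotProduct_smul,
    smul_eq_mul, dotProduct_comm x a, dotProduct_comm x b]
  ring

end CommRing

section LinearOrderedField

variable [Field R] [LinearOrder R] [IsStrictOrderedRing R]

theorem dotProduct_self_nonneg (v : m → R) : 0 ≤ v ⬝ᵥ v :=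
  Finset.sum_nonneg fun i _ => mul_self_nonneg (v i)

theorem sq_dotProduct_le_dotProduct_self_mul (a x : m → R) :
    (a ⬝ᵥ x) ^ 2 ≤ (a ⬝ᵥ a) * (x ⬝ᵥ x) := by
  rcases (dotProduct_self_nonneg a).eq_or_lt with haa | haa
  · simp [dotProduct_self_eq_zero.mp haa.symm]
  · have := dotProduct_self_nonneg ((a ⬝ᵥ a) • x - (a ⬝ᵥ x) • a)
    rw [dotProduct_self_smul_sub_dotProduct_smul] at this
    exact sub_nonneg.mp (nonneg_of_mul_nonneg_right this haa)

theorem dotProduct_self_smul_eq_of_sq_dotProduct_eq {a x : m → R}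
    (h : (a ⬝ᵥ x) ^ 2 = (a ⬝ᵥ a) * (x ⬝ᵥ x)) : (a ⬝ᵥ a) • x = (a ⬝ᵥ x) • a := by
  rw [← sub_eq_zero, ← dotProduct_self_eq_zero, dotProduct_self_smul_sub_dotProduct_smul, h,
    sub_self, mul_zero]

theorem eq_zero_of_sq_dotProduct_eq_of_dotProduct_eq_zero {a b x : m → R} (hab : a ⬝ᵥ b ≠ 0)
    (h : (a ⬝ᵥ x) ^ 2 = (a ⬝ᵥ a) * (x ⬝ᵥ x)) (hbx : b ⬝ᵥ x = 0) : x = 0 := by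
  have hx := dotProduct_self_smul_eq_of_sq_dotProduct_eq h
  have hax : a ⬝ᵥ x = 0 := by
    have := congrArg (b ⬝ᵥ ·) hx
    simp only [dotProduct_smul, smul_eq_mul, hbx, mul_zero, dotProduct_comm b a] at this
    exact (mul_eq_zero.mp this.symm).resolve_right hab
  have ha : a ≠ 0 := by rintro rfl; exact hab (zero_dotProduct b)
  rw [hax, zero_smul, smul_eq_zero] at hx
  exact hx.resolve_left (mt dotProduct_self_eq_zero.mp ha)

theorem rankOneSymmetrizer_posDef [DecidableEq m] [StarRing R] [TrivialStar R]
    {κ₀ κ₁ : R} {a b : m → R} (hab : a ⬝ᵥ b ≠ 0) (hκ₀ : 0 < κ₀) (hκ₁ : 0 < κ₁) :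
    (rankOneSymmetrizer κ₀ κ₁ a b).PosDef := by
  refine .of_dotProduct_mulVec_pos
    (isHermitian_iff_isSymm.mpr (rankOneSymmetrizer_isSymm κ₀ κ₁ a b)) fun x hx => ?_
  rw [star_trivial, dotProduct_rankOneSymmetrizer_mulVec]
  have hcs := sub_nonneg.mpr (sq_dotProduct_le_dotProduct_self_mul a x)
  by_cases hbx : b ⬝ᵥ x = 0
  · have hcs' : 0 < (a ⬝ᵥ a) * (x ⬝ᵥ x) - (a ⬝ᵥ x) ^ 2 :=
      hcs.lt_of_ne fun h => hx
        (eq_zero_of_sq_dotProduct_eq_of_dotProduct_eq_zero hab (sub_eq_zero.mp h.symm).symm hbx)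
    rw [hbx]
    positivity
  · positivity

end LinearOrderedField

theorem symmetrizer_of_rank_one_perturbation_general {n : ℕ} (a b : Fin n → ℝ)
    (hab : a ⬝ᵥ b ≠ 0)
    (κ₀ κ₁ : ℝ) (hκ₀ : 0 < κ₀) (hκ₁ : 0 < κ₁)
    (M H : Matrix (Fin n) (Fin n) ℝ)
    (hM : M = 1 + vecMulVec a b)
    (hH : H = κ₀ • ((a ⬝ᵥ a) • (1 : Matrix (Fin n) (Fin n) ℝ) - vecMulVec a a)
            + κ₁ • vecMulVec b b) :
    H.IsSymm ∧ H.PosDef ∧ H * M = Mᵀ * H := by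
  have hsymm := rankOneSymmetrizer_isSymm κ₀ κ₁ a b
  subst hM hH
  exact ⟨hsymm, rankOneSymmetrizer_posDef hab hκ₀ hκ₁,
    hsymm.mul_one_add_vecMulVec (rankOneSymmetrizer_mulVec_left κ₀ κ₁ a b)⟩

/-- If `a, b ∈ ℝⁿ` are nonzero with `aᵀb ≠ 0` and `κ₀, κ₁ > 0`, then
`H = κ₀(|a|² I − a aᵀ) + κ₁ b bᵀ` is symmetric positive definite and satisfies
`H M = Mᵀ H` where `M = I + a bᵀ`. -/
theorem symmetrizer_of_rank_one_perturbation {n : ℕ} (a b : Fin n → ℝ)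
    (ha : a ≠ 0) (hb : b ≠ 0) (hab : a ⬝ᵥ b ≠ 0)
    (κ₀ κ₁ : ℝ) (hκ₀ : 0 < κ₀) (hκ₁ : 0 < κ₁)
    (M H : Matrix (Fin n) (Fin n) ℝ)
    (hM : M = 1 + vecMulVec a b)
    (hH : H = κ₀ • ((a ⬝ᵥ a) • (1 : Matrix (Fin n) (Fin n) ℝ) - vecMulVec a a)
            + κ₁ • vecMulVec b b) :
    H.IsSymm ∧ H.PosDef ∧ H * M = Mᵀ * H :=
  symmetrizer_of_rank_one_perturbation_general a b hab κ₀ κ₁ hκ₀ hκ₁ M H hM hH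
end

section
/- Let a, b be nonzero vectors in ℝⁿ with aᵀb ≠ 0 and κ₀, κ₁ > 0, and set H = κ₀(|a|² I − a aᵀ) + κ₁ b bᵀ and M = I + a bᵀ. Then H M is symmetric, and equals κ₀(|a|² I − a aᵀ) + κ₁(1 + aᵀb) b bᵀ. -/
open Matrix

/-
`|a|² I − a aᵀ` annihilates `a`, so it kills the rank-one perturbation `a bᵀ` of the identity,
while `b bᵀ · a bᵀ = (aᵀb) b bᵀ`. Hence `H M = H + κ₁ (aᵀb) b bᵀ`, a combination of the
symmetric matrices `I`, `a aᵀ` and `b bᵀ`.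
-/

namespace Matrix

variable {n R : Type*} [Fintype n] [DecidableEq n] [CommRing R]

omit [Fintype n] [DecidableEq n] in
theorem isSymm_vecMulVec_self (v : n → R) : (vecMulVec v v).IsSymm :=
  transpose_vecMulVec v v

theorem dotProduct_self_smul_one_sub_vecMulVec_self_mulVec (a : n → R) :
    ((a ⬝ᵥ a) • (1 : Matrix n n R) - vecMulVec a a) *ᵥ a = 0 := by
  rw [sub_mulVec, smul_mulVec, one_mulVec, vecMulVec_mulVec, op_smul_eq_smul, sub_self]

omit [DecidableEq n] in
theorem vecMulVec_self_mul_vecMulVec (a b : n → R) :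
    vecMulVec b b * vecMulVec a b = (a ⬝ᵥ b) • vecMulVec b b := by
  rw [vecMulVec_mul_vecMulVec, vecMulVec_smul, dotProduct_comm]

theorem symmetrizer_mul_one_add_vecMulVec (a b : n → R) (κ₀ κ₁ : R) :
    (κ₀ • ((a ⬝ᵥ a) • (1 : Matrix n n R) - vecMulVec a a) + κ₁ • vecMulVec b b) *
        (1 + vecMulVec a b) =
      κ₀ • ((a ⬝ᵥ a) • (1 : Matrix n n R) - vecMulVec a a) +
        (κ₁ * (1 + a ⬝ᵥ b)) • vecMulVec b b := by
  have hP : ((a ⬝ᵥ a) • (1 : Matrix n n R) - vecMulVec a a) * vecMulVec a b = 0 := by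
    rw [mul_vecMulVec, dotProduct_self_smul_one_sub_vecMulVec_self_mulVec, zero_vecMulVec]
  rw [mul_one_add, add_mul, smul_mul_assoc, smul_mul_assoc, hP,
    vecMulVec_self_mul_vecMulVec]
  module

theorem isSymm_smul_sub_add_smul_vecMulVec (a b : n → R) (κ₀ κ₁ : R) :
    (κ₀ • ((a ⬝ᵥ a) • (1 : Matrix n n R) - vecMulVec a a) + κ₁ • vecMulVec b b).IsSymm :=
  ((((isSymm_one.smul _).sub (isSymm_vecMulVec_self a)).smul κ₀).add
    ((isSymm_vecMulVec_self b).smul κ₁))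

end Matrix

theorem symmetrizer_mul_rank_one_perturbation_general {n : ℕ} (a b : Fin n → ℝ)
    (κ₀ κ₁ : ℝ)
    (M H : Matrix (Fin n) (Fin n) ℝ)
    (hM : M = 1 + vecMulVec a b)
    (hH : H = κ₀ • ((a ⬝ᵥ a) • (1 : Matrix (Fin n) (Fin n) ℝ) - vecMulVec a a)
            + κ₁ • vecMulVec b b) :
    (H * M).IsSymm ∧
    H * M = κ₀ • ((a ⬝ᵥ a) • (1 : Matrix (Fin n) (Fin n) ℝ) - vecMulVec a a)
          + (κ₁ * (1 + a ⬝ᵥ b)) • vecMulVec b b := by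
  subst hM hH
  rw [symmetrizer_mul_one_add_vecMulVec]
  exact ⟨isSymm_smul_sub_add_smul_vecMulVec a b κ₀ _, rfl⟩

/-- With `H = κ₀(|a|² I − a aᵀ) + κ₁ b bᵀ` and `M = I + a bᵀ`, the product `H M`
is symmetric and equals `κ₀(|a|² I − a aᵀ) + κ₁(1 + aᵀb) b bᵀ`. -/
theorem symmetrizer_mul_rank_one_perturbation {n : ℕ} (a b : Fin n → ℝ)
    (ha : a ≠ 0) (hb : b ≠ 0) (hab : a ⬝ᵥ b ≠ 0)
    (κ₀ κ₁ : ℝ) (hκ₀ : 0 < κ₀) (hκ₁ : 0 < κ₁)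
    (M H : Matrix (Fin n) (Fin n) ℝ)
    (hM : M = 1 + vecMulVec a b)
    (hH : H = κ₀ • ((a ⬝ᵥ a) • (1 : Matrix (Fin n) (Fin n) ℝ) - vecMulVec a a)
            + κ₁ • vecMulVec b b) :
    (H * M).IsSymm ∧
    H * M = κ₀ • ((a ⬝ᵥ a) • (1 : Matrix (Fin n) (Fin n) ℝ) - vecMulVec a a)
          + (κ₁ * (1 + a ⬝ᵥ b)) • vecMulVec b b :=
  symmetrizer_mul_rank_one_perturbation_general a b κ₀ κ₁ M H hM hH
end

section
/- Let P be a real (n+m)×(n+m) matrix in block form P = [[0, Q],[R, 0]] with Q of size n×m and R of size m×n, and suppose M := Q R is diagonalizable with all eigenvalues strictly positive. Then P is diagonalizable over ℝ, and its eigenvalues are 0 (with multiplicity m − n, with eigenvectors (0, w) for w ∈ ker Q) together with ±√μ for each eigenvalue μ of M. -/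
/-!
Write `Q R S = S Λ²` with `Λ` diagonal and invertible. The columns of `(S Λ, R S)` and
`(S Λ, -R S)` are eigenvectors of `P = [[0, Q], [R, 0]]` for the eigenvalues `±Λ`, and `(0, w)`
with `Q w = 0` lies in the kernel of `P`. Since `Q R` is invertible, `Q` is surjective and
`ker Q` has dimension `m - n`, so there are `n + m` such vectors; they are independent because
applying `Q` to the lower block separates the `+` and `-` eigenvectors. They form an eigenbasis.
-/

namespace Matrix

variable {K : Type*} [Field K]

theorem exists_isDiag_conj_of_mul_eq_mul {ι κ : Type*} [Fintype ι] [DecidableEq ι] [Fintype κ]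
    (e : κ ≃ ι) {P : Matrix ι ι K} {S : Matrix ι κ K} {D : Matrix κ κ K}
    (hS : Function.Injective S.mulVec) (hD : D.IsDiag) (hPS : P * S = S * D) :
    ∃ S' D' : Matrix ι ι K, IsUnit S'.det ∧ D'.IsDiag ∧ P = S' * D' * S'⁻¹ := by
  set S' := S.submatrix id e.symm
  have hS' : IsUnit S'.det := by
    rw [← isUnit_iff_isUnit_det, ← mulVec_injective_iff_isUnit]
    intro v w hvw
    simp only [S', submatrix_mulVec_equiv, Equiv.symm_symm, Function.comp_id] at hvw
    exact e.surjective.injective_comp_right (hS hvw)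
  refine ⟨S', D.submatrix e.symm e.symm, hS', hD.submatrix e.symm.injective, ?_⟩
  have hPS' : P * S' = S' * D.submatrix e.symm e.symm := by
    have hP := submatrix_mul_equiv P S id (Equiv.refl ι) e.symm
    simp only [Equiv.coe_refl, submatrix_id_id] at hP
    rw [hP, hPS, submatrix_mul_equiv]
  rw [← hPS', mul_nonsing_inv_cancel_right _ _ hS']

theorem exists_isUnit_diagonal_mul_self_eq {n : Type*} [Fintype n] [DecidableEq n]
    {D : Matrix n n ℝ} (hD : D.IsDiag) (hpos : ∀ i, 0 < D i i) :
    ∃ d : n → ℝ, IsUnit (diagonal d) ∧ diagonal d * diagonal d = D := by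
  refine ⟨fun i => √(D i i), isUnit_diagonal.mpr
    (Pi.isUnit_iff.mpr fun i => (Real.sqrt_pos.mpr (hpos i)).ne'.isUnit), ?_⟩
  rw [diagonal_mul_diagonal]
  conv_rhs => rw [← hD.diagonal_diag]
  congr with i
  exact Real.mul_self_sqrt (hpos i).le

variable {m n k l : Type*}

def blockEigenvectors (X : Matrix n k K) (Y : Matrix m k K) (W : Matrix m l K) :
    Matrix (n ⊕ m) (k ⊕ (k ⊕ l)) K :=
  fromBlocks X (fromCols X 0) Y (fromCols (-Y) W)

variable [Fintype m]

theorem exists_mulVec_injective_mul_eq_zero (Q : Matrix n m K) :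
    ∃ W : Matrix m (Fin (Module.finrank K (LinearMap.ker Q.mulVecLin))) K,
      Function.Injective W.mulVec ∧ Q * W = 0 := by
  have b : Module.Basis (Fin (Module.finrank K (LinearMap.ker Q.mulVecLin))) K
      (LinearMap.ker Q.mulVecLin) := Module.finBasis K _
  refine ⟨of fun i j => (b j : m → K) i, ?_, ?_⟩
  · have hli : LinearIndependent K (fun j => (b j : m → K)) :=
      b.linearIndependent.map' (LinearMap.ker Q.mulVecLin).subtype (Submodule.ker_subtype _)
    exact mulVec_injective_iff.mpr hli
  · ext i j
    have h := congrFun (LinearMap.mem_ker.mp (b j).2) i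
    simpa only [mul_apply, of_apply, mulVecLin_apply, mulVec, dotProduct, zero_apply,
      Pi.zero_apply] using h

variable [Fintype k] [Fintype l]

theorem blockEigenvectors_mulVec_injective [CharZero K] {Q : Matrix n m K}
    {X : Matrix n k K} {Y : Matrix m k K} {W : Matrix m l K}
    (hX : Function.Injective X.mulVec) (hQY : Function.Injective (Q * Y).mulVec)
    (hW : Function.Injective W.mulVec) (hQW : Q * W = 0) :
    Function.Injective (blockEigenvectors X Y W).mulVec := by
  rw [← coe_mulVecLin, ← LinearMap.ker_eq_bot, LinearMap.ker_eq_bot']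
  intro v hv
  obtain ⟨a, b, c, rfl⟩ : ∃ a b c, v = a ⊕ᵥ (b ⊕ᵥ c) :=
    ⟨v ∘ Sum.inl, v ∘ Sum.inr ∘ Sum.inl, v ∘ Sum.inr ∘ Sum.inr, by ext (i | i | i) <;> rfl⟩
  rw [mulVecLin_apply, blockEigenvectors, fromBlocks_mulVec, Sum.elim_comp_inl, Sum.elim_comp_inr,
    fromCols_mulVec_sumElim, fromCols_mulVec_sumElim, ← Sum.elim_zero_zero, Sum.elim_eq_iff] at hv
  obtain ⟨htop, hbot⟩ := hv
  have hab : a + b = 0 := hX (by rw [mulVec_add, mulVec_zero, ← htop, zero_mulVec, add_zero])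
  have hba : a = b := by
    refine sub_eq_zero.mp (hQY ?_)
    have hQbot := congrArg Q.mulVec hbot
    rw [mulVec_zero]
    rwa [mulVec_add, mulVec_add, mulVec_mulVec, mulVec_mulVec, mulVec_mulVec,
      Matrix.mul_neg, hQW, zero_mulVec, add_zero, neg_mulVec, ← sub_eq_add_neg, ← mulVec_sub,
      mulVec_zero] at hQbot
  have ha : a = 0 := self_eq_neg.mp (add_eq_zero_iff_eq_neg.mp (hba ▸ hab))
  subst hba ha
  have hc : c = 0 := hW (by
    rwa [mulVec_zero, neg_mulVec, mulVec_zero, neg_zero, zero_add, zero_add,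
      ← mulVec_zero W] at hbot)
  rw [hc, Sum.elim_zero_zero, Sum.elim_zero_zero]

variable [Fintype n]

theorem card_add_finrank_ker_mulVecLin_of_isUnit_mul [DecidableEq n] {Q : Matrix n m K}
    {R : Matrix m n K} (h : IsUnit (Q * R)) :
    Fintype.card n + Module.finrank K (LinearMap.ker Q.mulVecLin) = Fintype.card m := by
  have hQ : Function.Surjective Q.mulVec :=
    mulVec_surjective_iff_exists_right_inverse.mpr
      ⟨R * ((h.unit⁻¹ : (Matrix n n K)ˣ) : Matrix n n K), by
        rw [← Matrix.mul_assoc, h.mul_val_inv]⟩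
  have := LinearMap.finrank_range_add_finrank_ker Q.mulVecLin
  rwa [LinearMap.range_eq_top.mpr hQ, finrank_top, Module.finrank_fintype_fun_eq_card,
    Module.finrank_fintype_fun_eq_card] at this

theorem fromBlocks_zero_mulVec_eigenvector {Q : Matrix n m K} {R : Matrix m n K} {lam : K}
    {e : n → K} (hlam : lam ≠ 0) (he : (Q * R) *ᵥ e = lam ^ 2 • e) :
    fromBlocks 0 Q R 0 *ᵥ (e ⊕ᵥ lam⁻¹ • R *ᵥ e) = lam • (e ⊕ᵥ lam⁻¹ • R *ᵥ e) := by
  have hlam' : lam⁻¹ * lam ^ 2 = lam := by field_simp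
  ext (i | i) <;>
    simp [fromBlocks_mulVec, mulVec_smul, mulVec_mulVec, he, smul_smul, hlam', hlam]

theorem fromBlocks_zero_mul_blockEigenvectors {Q : Matrix n m K} {R : Matrix m n K}
    {X : Matrix n k K} {Y : Matrix m k K} {W : Matrix m l K} {Λ : Matrix k k K}
    (hQY : Q * Y = X * Λ) (hRX : R * X = Y * Λ) (hQW : Q * W = 0) :
    fromBlocks 0 Q R 0 * blockEigenvectors X Y W =
      blockEigenvectors X Y W *
        (fromBlocks Λ 0 0 (fromBlocks (-Λ) 0 0 0) : Matrix (k ⊕ (k ⊕ l)) (k ⊕ (k ⊕ l)) K) := by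
  rw [blockEigenvectors, fromBlocks_multiply, fromBlocks_multiply]
  simp only [fromCols_mul_fromBlocks, mul_fromCols, Matrix.zero_mul, Matrix.mul_zero,
    add_zero, zero_add, Matrix.mul_neg, Matrix.neg_mul, neg_neg, hQY, hRX, hQW]

end Matrix

open Matrix

theorem block_offdiagonal_diagonalizable_general {n m : ℕ}
    (Q : Matrix (Fin n) (Fin m) ℝ) (R : Matrix (Fin m) (Fin n) ℝ)
    (P : Matrix (Fin n ⊕ Fin m) (Fin n ⊕ Fin m) ℝ)
    (hP : P = fromBlocks 0 Q R 0)
    (hM : ∃ (S D : Matrix (Fin n) (Fin n) ℝ), IsUnit S.det ∧ D.IsDiag ∧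
      Q * R = S * D * S⁻¹ ∧ ∀ i, 0 < D i i) :
    (∃ (S' D' : Matrix (Fin n ⊕ Fin m) (Fin n ⊕ Fin m) ℝ),
      IsUnit S'.det ∧ D'.IsDiag ∧ P = S' * D' * S'⁻¹) ∧
    (∀ w : Fin m → ℝ, Q.mulVec w = 0 → P.mulVec (Sum.elim 0 w) = 0) ∧
    Module.finrank ℝ (LinearMap.ker Q.mulVecLin) = m - n ∧
    (∀ (lam : ℝ) (e : Fin n → ℝ), lam ≠ 0 → e ≠ 0 →
      (Q * R).mulVec e = (lam ^ 2) • e →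
      P.mulVec (Sum.elim e (lam⁻¹ • R.mulVec e)) = lam • Sum.elim e (lam⁻¹ • R.mulVec e) ∧
      P.mulVec (Sum.elim e (-(lam⁻¹) • R.mulVec e))
        = (-lam) • Sum.elim e (-(lam⁻¹) • R.mulVec e)) := by
  subst hP
  obtain ⟨S, D, hS, hD, hQR, hDpos⟩ := hM
  obtain ⟨d, hd, hdd⟩ := exists_isUnit_diagonal_mul_self_eq hD hDpos
  have hSΛ : IsUnit (S * diagonal d) := ((isUnit_iff_isUnit_det S).mpr hS).mul hd
  have hSD : Q * R * S = S * diagonal d * diagonal d := by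
    rw [hQR, nonsing_inv_mul_cancel_right _ _ hS, Matrix.mul_assoc, hdd]
  have hQRS : IsUnit (Q * (R * S)) := by rw [← Matrix.mul_assoc, hSD]; exact hSΛ.mul hd
  have hker := card_add_finrank_ker_mulVecLin_of_isUnit_mul (R := R * S) hQRS
  rw [Fintype.card_fin, Fintype.card_fin] at hker
  obtain ⟨W, hW, hQW⟩ := exists_mulVec_injective_mul_eq_zero Q
  refine ⟨?_, fun w hw => by simp [fromBlocks_mulVec, hw], by omega,
    fun lam e hlam _ he => ⟨fromBlocks_zero_mulVec_eigenvector hlam he, ?_⟩⟩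
  · exact exists_isDiag_conj_of_mul_eq_mul
      ((Equiv.refl _).sumCongr (finSumFinEquiv.trans (finCongr hker)))
      (blockEigenvectors_mulVec_injective (mulVec_injective_iff_isUnit.mpr hSΛ)
        (mulVec_injective_iff_isUnit.mpr hQRS) hW hQW)
      ((isDiag_diagonal d).fromBlocks ((isDiag_diagonal d).neg.fromBlocks isDiag_zero))
      (fromBlocks_zero_mul_blockEigenvectors (by rw [← Matrix.mul_assoc, hSD])
        (Matrix.mul_assoc R S _).symm hQW)
  · simpa only [neg_sq, inv_neg] using
      fromBlocks_zero_mulVec_eigenvector (Q := Q) (R := R) (neg_ne_zero.mpr hlam) (by rwa [neg_sq])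

/-- If `P = [[0,Q],[R,0]]` in block form and `M := Q R` is diagonalizable with all
eigenvalues strictly positive, then `P` is diagonalizable over `ℝ`; its zero
eigenspace consists of the vectors `(0,w)` with `w ∈ ker Q` and has dimension
`m - n`, and for each eigenvector `e` of `M` with eigenvalue `λ² > 0`, the
vectors `(e, ±λ⁻¹ R e)` are eigenvectors of `P` with eigenvalues `±λ`. -/
theorem block_offdiagonal_diagonalizable {n m : ℕ} (hnm : n ≤ m)
    (Q : Matrix (Fin n) (Fin m) ℝ) (R : Matrix (Fin m) (Fin n) ℝ)
    (P : Matrix (Fin n ⊕ Fin m) (Fin n ⊕ Fin m) ℝ)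
    (hP : P = fromBlocks 0 Q R 0)
    (hM : ∃ (S D : Matrix (Fin n) (Fin n) ℝ), IsUnit S.det ∧ D.IsDiag ∧
      Q * R = S * D * S⁻¹ ∧ ∀ i, 0 < D i i) :
    (∃ (S' D' : Matrix (Fin n ⊕ Fin m) (Fin n ⊕ Fin m) ℝ),
      IsUnit S'.det ∧ D'.IsDiag ∧ P = S' * D' * S'⁻¹) ∧
    (∀ w : Fin m → ℝ, Q.mulVec w = 0 → P.mulVec (Sum.elim 0 w) = 0) ∧
    Module.finrank ℝ (LinearMap.ker Q.mulVecLin) = m - n ∧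
    (∀ (lam : ℝ) (e : Fin n → ℝ), lam ≠ 0 → e ≠ 0 →
      (Q * R).mulVec e = (lam ^ 2) • e →
      P.mulVec (Sum.elim e (lam⁻¹ • R.mulVec e)) = lam • Sum.elim e (lam⁻¹ • R.mulVec e) ∧
      P.mulVec (Sum.elim e (-(lam⁻¹) • R.mulVec e))
        = (-lam) • Sum.elim e (-(lam⁻¹) • R.mulVec e)) :=
  block_offdiagonal_diagonalizable_general Q R P hP hM
end

section
/- Define σ := 3Γ(1 + ΔΓ) and s₁² := Γ(2 + 3ΔΓ)/(1 + ΔΓ + (1 − Δ)(1 + 3ΔΓ + 3Δ²Γ²)), assuming the denominator is nonzero and 2 + 3ΔΓ ≠ 0. Then the two symmetry relations Γ = −(Γ − σ)/(2 + 3ΔΓ) and Γ/s₁² − (1 + ΔΓ) = −Δ(1 + Γ + Δσ)/(2 + 3ΔΓ) both hold. -/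
/-! Both relations become polynomial identities once `2 + 3ΔΓ` is cleared: `σ` is chosen so that
`Γ - σ = -Γ(2 + 3ΔΓ)`, and `s₁²` so that `Γ / s₁² = D / (2 + 3ΔΓ)` with
`D = 1 + ΔΓ + (1 - Δ)(1 + 3ΔΓ + 3Δ²Γ²)`, where `D - (1 + ΔΓ)(2 + 3ΔΓ) = -Δ(1 + Γ + Δσ)`. -/

section

variable {K : Type*} [Field K]

theorem div_div_mul_cancel_left {a : K} (b c : K) (ha : a ≠ 0) : a / (a * b / c) = c / b := by
  rw [div_div_eq_mul_div, mul_div_mul_left c b ha]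

theorem symmetry_relation_gamma (Δ Γ : K) (h2 : 2 + 3 * Δ * Γ ≠ 0) :
    Γ = -(Γ - 3 * Γ * (1 + Δ * Γ)) / (2 + 3 * Δ * Γ) := by
  rw [eq_div_iff h2]
  ring

theorem symmetry_relation_s₁sq (Δ Γ : K) (h2 : 2 + 3 * Δ * Γ ≠ 0) :
    (1 + Δ * Γ + (1 - Δ) * (1 + 3 * Δ * Γ + 3 * Δ ^ 2 * Γ ^ 2)) / (2 + 3 * Δ * Γ) - (1 + Δ * Γ) =
      -Δ * (1 + Γ + Δ * (3 * Γ * (1 + Δ * Γ))) / (2 + 3 * Δ * Γ) := by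
  rw [div_sub' h2]
  ring

end

theorem symmetric_hyperbolicity_relations_general (Δ Γ σ s₁sq : ℝ)
    (hσ : σ = 3 * Γ * (1 + Δ * Γ))
    (hs : s₁sq = Γ * (2 + 3 * Δ * Γ)
      / (1 + Δ * Γ + (1 - Δ) * (1 + 3 * Δ * Γ + 3 * Δ ^ 2 * Γ ^ 2)))
    (h2 : 2 + 3 * Δ * Γ ≠ 0) (hΓ : Γ ≠ 0) :
    Γ = -(Γ - σ) / (2 + 3 * Δ * Γ) ∧
    Γ / s₁sq - (1 + Δ * Γ) = -Δ * (1 + Γ + Δ * σ) / (2 + 3 * Δ * Γ) := by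
  subst hσ hs
  rw [div_div_mul_cancel_left _ _ hΓ]
  exact ⟨symmetry_relation_gamma Δ Γ h2, symmetry_relation_s₁sq Δ Γ h2⟩

/-- With `σ := 3Γ(1 + ΔΓ)` and
`s₁² := Γ(2 + 3ΔΓ)/(1 + ΔΓ + (1 − Δ)(1 + 3ΔΓ + 3Δ²Γ²))` (denominator nonzero,
`2 + 3ΔΓ ≠ 0`, `Γ ≠ 0` so that `s₁² ≠ 0`), the two symmetry relations
`Γ = −(Γ − σ)/(2 + 3ΔΓ)` and `Γ/s₁² − (1 + ΔΓ) = −Δ(1 + Γ + Δσ)/(2 + 3ΔΓ)` hold. -/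
theorem symmetric_hyperbolicity_relations (Δ Γ σ s₁sq : ℝ)
    (hσ : σ = 3 * Γ * (1 + Δ * Γ))
    (hden : 1 + Δ * Γ + (1 - Δ) * (1 + 3 * Δ * Γ + 3 * Δ ^ 2 * Γ ^ 2) ≠ 0)
    (hs : s₁sq = Γ * (2 + 3 * Δ * Γ)
      / (1 + Δ * Γ + (1 - Δ) * (1 + 3 * Δ * Γ + 3 * Δ ^ 2 * Γ ^ 2)))
    (h2 : 2 + 3 * Δ * Γ ≠ 0) (hΓ : Γ ≠ 0) :
    Γ = -(Γ - σ) / (2 + 3 * Δ * Γ) ∧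
    Γ / s₁sq - (1 + Δ * Γ) = -Δ * (1 + Γ + Δ * σ) / (2 + 3 * Δ * Γ) :=
  symmetric_hyperbolicity_relations_general Δ Γ σ s₁sq hσ hs h2 hΓ
end
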